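/- Define the third-order operator 𝓛 on smooth functions on U = {x ∈ ℝ : x ≠ 0} by (𝓛f)(x) = f‴(x) − (26/x²)·f′(x) + (x⁶/5832 − 28/x³)·f(x). Let L₂⁰ be the operator (L₂⁰f)(x) = f⁽¹²⁾(x) + ∑_{m=0}^{10} g_m(x)·f⁽ᵐ⁾(x) with coefficients g₁₀(x) = −104/x²; g₉(x) = 824/x³ + x⁶/1458; g₈(x) = −2856/x⁴ + x⁵/54; g₇(x) = −672/x⁵ + 109x⁴/486; g₆(x) = 86464/x⁶ + 316x³/243 + x¹²/5668704; g₅(x) = −693504/x⁷ + 221x²/243 + x¹¹/157464; g₄(x) = 3395840/x⁸ − 2834x/243 + 307x¹⁰/2834352; g₃(x) = −5992/729 − 11567360/x⁹ + 1393x⁹/1417176 + x¹⁸/49589822592; g₂(x) = 27758080/x¹⁰ + 296/(9x) + 6595x⁸/1417176 + x¹⁷/1836660096; g₁(x) = −45660160/x¹¹ + 20048/(729x²) + 7111x⁷/708588 + 325x¹⁶/49589822592; g₀(x) = 45660160/x¹² − 20048/(729x³) + 4553x⁶/708588 + 661x¹⁵/24794911296 + x²⁴/1156831381426176 (these are the coefficients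 of L₂ specialized at ε = 0). Then for every infinitely differentiable function f on U and every x ∈ U, (L₂⁰f)(x) = (𝓛(𝓛(𝓛(𝓛f))))(x) − (𝓛f)(x), i.e., L₂⁰ = 𝓛⁴ − 𝓛. -/

import Mathlib

/-- The third-order operator 𝓛 = d³/dx³ − (26/x²)d/dx − 28/x³ + x⁶/5832. -/
noncomputable def calL (f : ℝ → ℝ) (x : ℝ) : ℝ :=
  iteratedDeriv 3 f x - (26 / x ^ 2) * deriv f x + (x ^ 6 / 5832 - 28 / x ^ 3) * f x

/-- Coefficients of L₂ specialized at ε = 0. -/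
noncomputable def gcoef10 (x : ℝ) : ℝ := -104 / x ^ 2

noncomputable def gcoef9 (x : ℝ) : ℝ := 824 / x ^ 3 + x ^ 6 / 1458

noncomputable def gcoef8 (x : ℝ) : ℝ := -2856 / x ^ 4 + x ^ 5 / 54

noncomputable def gcoef7 (x : ℝ) : ℝ := -672 / x ^ 5 + 109 * x ^ 4 / 486

noncomputable def gcoef6 (x : ℝ) : ℝ :=
  86464 / x ^ 6 + 316 * x ^ 3 / 243 + x ^ 12 / 5668704

noncomputable def gcoef5 (x : ℝ) : ℝ :=
  -693504 / x ^ 7 + 221 * x ^ 2 / 243 + x ^ 11 / 157464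

noncomputable def gcoef4 (x : ℝ) : ℝ :=
  3395840 / x ^ 8 - 2834 * x / 243 + 307 * x ^ 10 / 2834352

noncomputable def gcoef3 (x : ℝ) : ℝ :=
  -5992 / 729 - 11567360 / x ^ 9 + 1393 * x ^ 9 / 1417176 + x ^ 18 / 49589822592

noncomputable def gcoef2 (x : ℝ) : ℝ :=
  27758080 / x ^ 10 + 296 / (9 * x) + 6595 * x ^ 8 / 1417176 + x ^ 17 / 1836660096

noncomputable def gcoef1 (x : ℝ) : ℝ :=
  -45660160 / x ^ 11 + 20048 / (729 * x ^ 2) + 7111 * x ^ 7 / 708588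
    + 325 * x ^ 16 / 49589822592

noncomputable def gcoef0 (x : ℝ) : ℝ :=
  45660160 / x ^ 12 - 20048 / (729 * x ^ 3) + 4553 * x ^ 6 / 708588
    + 661 * x ^ 15 / 24794911296 + x ^ 24 / 1156831381426176

/-- The 12th-order operator L₂ at ε = 0. -/
noncomputable def L2zero (f : ℝ → ℝ) (x : ℝ) : ℝ :=
  iteratedDeriv 12 f x
    + gcoef10 x * iteratedDeriv 10 f x
    + gcoef9 x * iteratedDeriv 9 f x
    + gcoef8 x * iteratedDeriv 8 f x
    + gcoef7 x * iteratedDeriv 7 f x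
    + gcoef6 x * iteratedDeriv 6 f x
    + gcoef5 x * iteratedDeriv 5 f x
    + gcoef4 x * iteratedDeriv 4 f x
    + gcoef3 x * iteratedDeriv 3 f x
    + gcoef2 x * iteratedDeriv 2 f x
    + gcoef1 x * iteratedDeriv 1 f x
    + gcoef0 x * f x

/-- Laurent-monomial list: `(a, b, c)` represents `c * x^a / x^b`. -/
abbrev LP := List (ℕ × ℕ × ℝ)

noncomputable def Lev (p : LP) (x : ℝ) : ℝ :=
  (p.map (fun t => t.2.2 * x ^ t.1 / x ^ t.2.1)).sum

def Lder (p : LP) : LP := p.map (fun t => (t.1, t.2.1 + 1, t.2.2 * ((t.1 : ℝ) - t.2.1)))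

def opAdd : List LP → List LP → List LP
  | [], qs => qs
  | ps, [] => ps
  | p :: ps, q :: qs => (p ++ q) :: opAdd ps qs

def opD (cs : List LP) : List LP := opAdd (cs.map Lder) ([] :: cs)

noncomputable def OpEv : List LP → (ℝ → ℝ) → ℝ → ℝ
  | [], _, _ => 0
  | p :: ps, f, x => Lev p x * f x + OpEv ps (deriv f) x

lemma Lev_nil (x : ℝ) : Lev [] x = 0 := rfl

lemma Lev_cons (t : ℕ × ℕ × ℝ) (p : LP) (x : ℝ) :
    Lev (t :: p) x = t.2.2 * x ^ t.1 / x ^ t.2.1 + Lev p x := by simp [Lev]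

lemma Lev_append (p q : LP) (x : ℝ) : Lev (p ++ q) x = Lev p x + Lev q x := by
  simp [Lev]

lemma mono_hasDerivAt (a b : ℕ) (c : ℝ) {x : ℝ} (hx : x ≠ 0) :
    HasDerivAt (fun y : ℝ => c * y ^ a / y ^ b)
      (c * ((a : ℝ) - b) * x ^ a / x ^ (b + 1)) x := by
  have h := ((hasDerivAt_pow a x).const_mul c).div (hasDerivAt_pow b x) (pow_ne_zero b hx)
  refine h.congr_deriv ?_
  rcases a with _ | a <;> rcases b with _ | b <;>
    · push_cast [Nat.add_sub_cancel]
      field_simp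
      try ring

lemma Lev_hasDerivAt (p : LP) {x : ℝ} (hx : x ≠ 0) :
    HasDerivAt (fun y => Lev p y) (Lev (Lder p) x) x := by
  induction p with
  | nil => simpa [Lev, Lder] using (hasDerivAt_const x (0 : ℝ))
  | cons t p ih =>
      have h := (mono_hasDerivAt t.1 t.2.1 t.2.2 hx).add ih
      have hfun : (fun y => Lev (t :: p) y)
          = fun y => t.2.2 * y ^ t.1 / y ^ t.2.1 + Lev p y := by
        funext y; simp [Lev_cons]
      have hval : Lev (Lder (t :: p)) x
          = t.2.2 * ((t.1 : ℝ) - t.2.1) * x ^ t.1 / x ^ (t.2.1 + 1) + Lev (Lder p) x := by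
        simp [Lder, Lev_cons]
      rw [hfun, hval]
      exact h

lemma OpEv_nil (f : ℝ → ℝ) (x : ℝ) : OpEv [] f x = 0 := rfl

lemma OpEv_cons (p : LP) (ps : List LP) (f : ℝ → ℝ) (x : ℝ) :
    OpEv (p :: ps) f x = Lev p x * f x + OpEv ps (deriv f) x := rfl

lemma OpEv_opAdd (a b : List LP) (f : ℝ → ℝ) (x : ℝ) :
    OpEv (opAdd a b) f x = OpEv a f x + OpEv b f x := by
  induction a generalizing b f with
  | nil => simp [opAdd, OpEv]
  | cons p ps ih =>
      cases b with
      | nil => simp [opAdd, OpEv]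
      | cons q qs =>
          simp only [opAdd, OpEv_cons, Lev_append, ih]
          ring

lemma OpEv_opD (cs : List LP) (f : ℝ → ℝ) (x : ℝ) :
    OpEv (opD cs) f x = OpEv (cs.map Lder) f x + OpEv cs (deriv f) x := by
  simp [opD, OpEv_opAdd, OpEv_cons, Lev_nil]

/-- Smoothness predicate on `{x ≠ 0}` packaged pointwise. -/
def Sm (f : ℝ → ℝ) : Prop :=
  ∀ n : ℕ, ∀ x : ℝ, x ≠ 0 → HasDerivAt (iteratedDeriv n f) (iteratedDeriv (n + 1) f x) x

lemma Sm.derivStep {f : ℝ → ℝ} (h : Sm f) : Sm (deriv f) := by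
  intro n x hx
  have h' := h (n + 1) x hx
  simp only [← iteratedDeriv_succ']
  exact h'

lemma Sm.self {f : ℝ → ℝ} (h : Sm f) {x : ℝ} (hx : x ≠ 0) :
    HasDerivAt f (deriv f x) x := by
  have h' := h 0 x hx
  simpa [iteratedDeriv_one] using h'

lemma OpEv_hasDerivAt (cs : List LP) (f : ℝ → ℝ) (h : Sm f) {x : ℝ} (hx : x ≠ 0) :
    HasDerivAt (fun y => OpEv cs f y) (OpEv (opD cs) f x) x := by
  induction cs generalizing f with
  | nil => simpa [opD, opAdd, OpEv, Lev] using (hasDerivAt_const x (0 : ℝ))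
  | cons p ps ih =>
      have h1 : HasDerivAt (fun y => Lev p y * f y)
          (Lev (Lder p) x * f x + Lev p x * deriv f x) x :=
        (Lev_hasDerivAt p hx).mul (h.self hx)
      have h2 := ih (deriv f) h.derivStep
      have h3 := h1.add h2
      refine h3.congr_deriv ?_
      simp only [OpEv_opD, OpEv_cons, List.map_cons]
      ring

lemma evEq {g h : ℝ → ℝ} (H : ∀ y : ℝ, y ≠ 0 → g y = h y) {x : ℝ} (hx : x ≠ 0) :
    g =ᶠ[nhds x] h :=
  Filter.eventually_of_mem (isOpen_ne.mem_nhds hx) (fun y hy => H y hy)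

lemma OpEv_deriv_eq (cs : List LP) (f : ℝ → ℝ) (h : Sm f) :
    ∀ y : ℝ, y ≠ 0 → deriv (OpEv cs f) y = OpEv (opD cs) f y :=
  fun y hy => (OpEv_hasDerivAt cs f h hy).deriv

lemma iteratedDeriv_three (g : ℝ → ℝ) (x : ℝ) :
    iteratedDeriv 3 g x = deriv (deriv (deriv g)) x := by
  rw [show (3 : ℕ) = 2 + 1 from rfl, iteratedDeriv_succ,
    show (2 : ℕ) = 1 + 1 from rfl, iteratedDeriv_succ, iteratedDeriv_one]

lemma calL_congr {g h : ℝ → ℝ} {x : ℝ} (e : g =ᶠ[nhds x] h) : calL g x = calL h x := by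
  unfold calL
  rw [iteratedDeriv_three, iteratedDeriv_three, e.deriv.deriv.deriv_eq, e.deriv_eq,
    e.eq_of_nhds]

lemma calL_OpEv (cs : List LP) (f : ℝ → ℝ) (h : Sm f) {x : ℝ} (hx : x ≠ 0) :
    calL (OpEv cs f) x =
      OpEv (opD (opD (opD cs))) f x - 26 / x ^ 2 * OpEv (opD cs) f x
        + (x ^ 6 / 5832 - 28 / x ^ 3) * OpEv cs f x := by
  have hd1 := OpEv_deriv_eq cs f h
  have hd2 := OpEv_deriv_eq (opD cs) f h
  have hd3 := OpEv_deriv_eq (opD (opD cs)) f h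
  have e1 : deriv (OpEv cs f) =ᶠ[nhds x] OpEv (opD cs) f := evEq hd1 hx
  have e2 : deriv (deriv (OpEv cs f)) =ᶠ[nhds x] OpEv (opD (opD cs)) f :=
    e1.deriv.trans (evEq hd2 hx)
  have e3 : deriv (deriv (deriv (OpEv cs f))) =ᶠ[nhds x] OpEv (opD (opD (opD cs))) f :=
    e2.deriv.trans (evEq hd3 hx)
  unfold calL
  rw [iteratedDeriv_three, e3.eq_of_nhds, hd1 x hx]

lemma Sm_of {f : ℝ → ℝ} (hf : ContDiffOn ℝ (⊤ : ℕ∞) f {x : ℝ | x ≠ 0}) : Sm f := by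
  have key : ∀ n : ℕ, ContDiffOn ℝ (⊤ : ℕ∞) (iteratedDeriv n f) {x : ℝ | x ≠ 0} := by
    intro n
    induction n with
    | zero => simpa [iteratedDeriv_zero] using hf
    | succ n ih =>
        rw [iteratedDeriv_succ]
        exact ih.deriv_of_isOpen isOpen_ne (by simp)
  intro n x hx
  have hU : {x : ℝ | x ≠ 0} ∈ nhds x := isOpen_ne.mem_nhds hx
  have hd : DifferentiableAt ℝ (iteratedDeriv n f) x :=
    ((key n).differentiableOn (by simp)).differentiableAt hU
  rw [iteratedDeriv_succ]
  exact hd.hasDerivAt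

noncomputable def opBase : List LP := [[(0, 0, (1 : ℝ))]]

noncomputable def opC1 : List LP :=
  [[(0, 3, (-28 : ℝ)), (6, 0, ((1 : ℝ)/5832))],
  [(0, 2, (-26 : ℝ))],
  [],
  [(0, 0, (1 : ℝ))]]
noncomputable def opC2 : List LP :=
  [[(0, 6, (280 : ℝ)), (3, 0, ((-23 : ℝ)/1458)), (12, 0, ((1 : ℝ)/34012224))],
  [(0, 5, (-280 : ℝ)), (4, 0, ((19 : ℝ)/2916))],
  [(0, 4, (460 : ℝ)), (5, 0, ((1 : ℝ)/324))],
  [(0, 3, (100 : ℝ)), (6, 0, ((1 : ℝ)/2916))],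
  [(0, 2, (-52 : ℝ))],
  [],
  [(0, 0, (1 : ℝ))]]
noncomputable def opC3 : List LP :=
  [[(0, 9, (-58240 : ℝ)), (0, 0, ((395 : ℝ)/243)), (9, 0, ((37 : ℝ)/1417176)), (18, 0, ((1 : ℝ)/198359290368))],
  [(0, 8, (58240 : ℝ)), (1, 0, ((-152 : ℝ)/243)), (10, 0, ((17 : ℝ)/1417176))],
  [(0, 7, (-43200 : ℝ)), (2, 0, ((-73 : ℝ)/243)), (11, 0, ((1 : ℝ)/629856))],
  [(0, 6, (19120 : ℝ)), (3, 0, ((79 : ℝ)/486)), (12, 0, ((1 : ℝ)/11337408))],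
  [(0, 5, (-4800 : ℝ)), (4, 0, ((16 : ℝ)/243))],
  [(0, 4, (-24 : ℝ)), (5, 0, ((1 : ℝ)/108))],
  [(0, 3, (384 : ℝ)), (6, 0, ((1 : ℝ)/1944))],
  [(0, 2, (-78 : ℝ))],
  [],
  [(0, 0, (1 : ℝ))]]
noncomputable def opC4 : List LP :=
  [[(0, 12, (45660160 : ℝ)), (0, 3, ((-40460 : ℝ)/729)), (6, 0, ((9349 : ℝ)/1417176)), (15, 0, ((661 : ℝ)/24794911296)), (24, 0, ((1 : ℝ)/1156831381426176))],
  [(0, 11, (-45660160 : ℝ)), (0, 2, ((1094 : ℝ)/729)), (7, 0, ((7111 : ℝ)/708588)), (16, 0, ((325 : ℝ)/49589822592))],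
  [(0, 10, (27758080 : ℝ)), (0, 1, ((296 : ℝ)/9)), (8, 0, ((6595 : ℝ)/1417176)), (17, 0, ((1 : ℝ)/1836660096))],
  [(0, 9, (-11567360 : ℝ)), (0, 0, ((-5263 : ℝ)/729)), (9, 0, ((1393 : ℝ)/1417176)), (18, 0, ((1 : ℝ)/49589822592))],
  [(0, 8, (3395840 : ℝ)), (1, 0, ((-2834 : ℝ)/243)), (10, 0, ((307 : ℝ)/2834352))],
  [(0, 7, (-693504 : ℝ)), (2, 0, ((221 : ℝ)/243)), (11, 0, ((1 : ℝ)/157464))],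
  [(0, 6, (86464 : ℝ)), (3, 0, ((316 : ℝ)/243)), (12, 0, ((1 : ℝ)/5668704))],
  [(0, 5, (-672 : ℝ)), (4, 0, ((109 : ℝ)/486))],
  [(0, 4, (-2856 : ℝ)), (5, 0, ((1 : ℝ)/54))],
  [(0, 3, (824 : ℝ)), (6, 0, ((1 : ℝ)/1458))],
  [(0, 2, (-104 : ℝ))],
  [],
  [(0, 0, (1 : ℝ))]]

noncomputable def opC3d1 : List LP :=
  [[(0, 10, (524160 : ℝ)), (8, 0, ((37 : ℝ)/157464)), (17, 0, ((1 : ℝ)/11019960576))],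
  [(0, 9, (-524160 : ℝ)), (0, 0, (1 : ℝ)), (9, 0, ((23 : ℝ)/157464)), (18, 0, ((1 : ℝ)/198359290368))],
  [(0, 8, (360640 : ℝ)), (1, 0, ((-298 : ℝ)/243)), (10, 0, ((167 : ℝ)/5668704))],
  [(0, 7, (-157920 : ℝ)), (2, 0, ((91 : ℝ)/486)), (11, 0, ((5 : ℝ)/1889568))],
  [(0, 6, (43120 : ℝ)), (3, 0, ((23 : ℝ)/54)), (12, 0, ((1 : ℝ)/11337408))],
  [(0, 5, (-4704 : ℝ)), (4, 0, ((109 : ℝ)/972))],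
  [(0, 4, (-1176 : ℝ)), (5, 0, ((1 : ℝ)/81))],
  [(0, 3, (540 : ℝ)), (6, 0, ((1 : ℝ)/1944))],
  [(0, 2, (-78 : ℝ))],
  [],
  [(0, 0, (1 : ℝ))]]
noncomputable def opC3d2 : List LP :=
  [[(0, 11, (-5241600 : ℝ)), (7, 0, ((37 : ℝ)/19683)), (16, 0, ((17 : ℝ)/11019960576))],
  [(0, 10, (5241600 : ℝ)), (8, 0, ((61 : ℝ)/39366)), (17, 0, ((1 : ℝ)/5509980288))],
  [(0, 9, (-3409280 : ℝ)), (0, 0, ((-55 : ℝ)/243)), (9, 0, ((1249 : ℝ)/2834352)), (18, 0, ((1 : ℝ)/198359290368))],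
  [(0, 8, (1466080 : ℝ)), (1, 0, ((-23 : ℝ)/27)), (10, 0, ((83 : ℝ)/1417176))],
  [(0, 7, (-416640 : ℝ)), (2, 0, ((356 : ℝ)/243)), (11, 0, ((7 : ℝ)/1889568))],
  [(0, 6, (66640 : ℝ)), (3, 0, ((425 : ℝ)/486)), (12, 0, ((1 : ℝ)/11337408))],
  [(4, 0, ((169 : ℝ)/972))],
  [(0, 4, (-2796 : ℝ)), (5, 0, ((5 : ℝ)/324))],
  [(0, 3, (696 : ℝ)), (6, 0, ((1 : ℝ)/1944))],
  [(0, 2, (-78 : ℝ))],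
  [],
  [(0, 0, (1 : ℝ))]]
noncomputable def opC3d3 : List LP :=
  [[(0, 12, (57657600 : ℝ)), (6, 0, ((259 : ℝ)/19683)), (15, 0, ((17 : ℝ)/688747536))],
  [(0, 11, (-57657600 : ℝ)), (7, 0, ((281 : ℝ)/19683)), (16, 0, ((17 : ℝ)/3673320192))],
  [(0, 10, (35925120 : ℝ)), (8, 0, ((193 : ℝ)/34992)), (17, 0, ((1 : ℝ)/3673320192))],
  [(0, 9, (-15137920 : ℝ)), (0, 0, ((-262 : ℝ)/243)), (9, 0, ((2909 : ℝ)/2834352)), (18, 0, ((1 : ℝ)/198359290368))],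
  [(0, 8, (4382560 : ℝ)), (1, 0, ((505 : ℝ)/243)), (10, 0, ((563 : ℝ)/5668704))],
  [(0, 7, (-816480 : ℝ)), (2, 0, ((1987 : ℝ)/486)), (11, 0, ((1 : ℝ)/209952))],
  [(0, 6, (66640 : ℝ)), (3, 0, ((763 : ℝ)/486)), (12, 0, ((1 : ℝ)/11337408))],
  [(0, 5, (11184 : ℝ)), (4, 0, ((61 : ℝ)/243))],
  [(0, 4, (-4884 : ℝ)), (5, 0, ((1 : ℝ)/54))],
  [(0, 3, (852 : ℝ)), (6, 0, ((1 : ℝ)/1944))],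
  [(0, 2, (-78 : ℝ))],
  [],
  [(0, 0, (1 : ℝ))]]

lemma calL_OpEv' (cs c1 c2 c3 : List LP) (f : ℝ → ℝ) (h : Sm f)
    (E1 : ∀ y : ℝ, y ≠ 0 → OpEv (opD cs) f y = OpEv c1 f y)
    (E2 : ∀ y : ℝ, y ≠ 0 → OpEv (opD c1) f y = OpEv c2 f y)
    (E3 : ∀ y : ℝ, y ≠ 0 → OpEv (opD c2) f y = OpEv c3 f y)
    {x : ℝ} (hx : x ≠ 0) :
    calL (OpEv cs f) x = OpEv c3 f x - 26 / x ^ 2 * OpEv c1 f x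
      + (x ^ 6 / 5832 - 28 / x ^ 3) * OpEv cs f x := by
  have hd1 : ∀ y : ℝ, y ≠ 0 → deriv (OpEv cs f) y = OpEv c1 f y :=
    fun y hy => (OpEv_deriv_eq cs f h y hy).trans (E1 y hy)
  have hd2 : ∀ y : ℝ, y ≠ 0 → deriv (OpEv c1 f) y = OpEv c2 f y :=
    fun y hy => (OpEv_deriv_eq c1 f h y hy).trans (E2 y hy)
  have hd3 : ∀ y : ℝ, y ≠ 0 → deriv (OpEv c2 f) y = OpEv c3 f y :=
    fun y hy => (OpEv_deriv_eq c2 f h y hy).trans (E3 y hy)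
  have e1 : deriv (OpEv cs f) =ᶠ[nhds x] OpEv c1 f := evEq hd1 hx
  have e2 : deriv (deriv (OpEv cs f)) =ᶠ[nhds x] OpEv c2 f := e1.deriv.trans (evEq hd2 hx)
  have e3 : deriv (deriv (deriv (OpEv cs f))) =ᶠ[nhds x] OpEv c3 f :=
    e2.deriv.trans (evEq hd3 hx)
  unfold calL
  rw [iteratedDeriv_three, e3.eq_of_nhds, hd1 x hx]


lemma hbase_eq (f : ℝ → ℝ) : OpEv opBase f = f := by
  funext y; simp [OpEv, Lev, opBase]

set_option maxHeartbeats 4000000 in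
lemma stage1 (f : ℝ → ℝ) (hs : Sm f) :
    ∀ y : ℝ, y ≠ 0 → calL f y = OpEv opC1 f y := by
  intro y hy
  have h0 : calL f y = calL (OpEv opBase f) y := by rw [hbase_eq]
  rw [h0, calL_OpEv opBase f hs hy]
  simp only [opBase, opC1, opD, opAdd, Lder, List.map_cons, List.map_nil, List.cons_append, List.nil_append, List.append_nil, OpEv_cons, OpEv_nil, Lev_cons, Lev_nil]
  field_simp
  ring

set_option maxHeartbeats 4000000 in
lemma stage2 (f : ℝ → ℝ) (hs : Sm f) :
    ∀ y : ℝ, y ≠ 0 → calL (calL f) y = OpEv opC2 f y := by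
  intro y hy
  have h0 : calL (calL f) y = calL (OpEv opC1 f) y := calL_congr (evEq (stage1 f hs) hy)
  rw [h0, calL_OpEv opC1 f hs hy]
  simp only [opC1, opC2, opD, opAdd, Lder, List.map_cons, List.map_nil, List.cons_append, List.nil_append, List.append_nil, OpEv_cons, OpEv_nil, Lev_cons, Lev_nil]
  field_simp
  ring

set_option maxHeartbeats 4000000 in
lemma stage3 (f : ℝ → ℝ) (hs : Sm f) :
    ∀ y : ℝ, y ≠ 0 → calL (calL (calL f)) y = OpEv opC3 f y := by
  intro y hy
  have h0 : calL (calL (calL f)) y = calL (OpEv opC2 f) y := calL_congr (evEq (stage2 f hs) hy)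
  rw [h0, calL_OpEv opC2 f hs hy]
  simp only [opC2, opC3, opD, opAdd, Lder, List.map_cons, List.map_nil, List.cons_append, List.nil_append, List.append_nil, OpEv_cons, OpEv_nil, Lev_cons, Lev_nil]
  field_simp
  ring

set_option maxHeartbeats 4000000 in
lemma Elem1 (f : ℝ → ℝ) (hs : Sm f) :
    ∀ y : ℝ, y ≠ 0 → OpEv (opD opC3) f y = OpEv opC3d1 f y := by
  intro y hy
  simp only [opC3, opC3d1, opD, opAdd, Lder, List.map_cons, List.map_nil, List.cons_append, List.nil_append, List.append_nil, OpEv_cons, OpEv_nil, Lev_cons, Lev_nil]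
  field_simp
  ring

set_option maxHeartbeats 4000000 in
lemma Elem2 (f : ℝ → ℝ) (hs : Sm f) :
    ∀ y : ℝ, y ≠ 0 → OpEv (opD opC3d1) f y = OpEv opC3d2 f y := by
  intro y hy
  simp only [opC3d1, opC3d2, opD, opAdd, Lder, List.map_cons, List.map_nil, List.cons_append, List.nil_append, List.append_nil, OpEv_cons, OpEv_nil, Lev_cons, Lev_nil]
  field_simp
  ring

set_option maxHeartbeats 4000000 in
lemma Elem3 (f : ℝ → ℝ) (hs : Sm f) :
    ∀ y : ℝ, y ≠ 0 → OpEv (opD opC3d2) f y = OpEv opC3d3 f y := by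
  intro y hy
  simp only [opC3d2, opC3d3, opD, opAdd, Lder, List.map_cons, List.map_nil, List.cons_append, List.nil_append, List.append_nil, OpEv_cons, OpEv_nil, Lev_cons, Lev_nil]
  field_simp
  ring

set_option maxHeartbeats 4000000 in
lemma stage4 (f : ℝ → ℝ) (hs : Sm f) :
    ∀ y : ℝ, y ≠ 0 → calL (calL (calL (calL f))) y = OpEv opC4 f y := by
  intro y hy
  have h0 : calL (calL (calL (calL f))) y = calL (OpEv opC3 f) y := calL_congr (evEq (stage3 f hs) hy)
  rw [h0, calL_OpEv' opC3 opC3d1 opC3d2 opC3d3 f hs (Elem1 f hs) (Elem2 f hs) (Elem3 f hs) hy]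
  simp only [opC3, opC3d1, opC3d3, opC4, OpEv_cons, OpEv_nil, Lev_cons, Lev_nil]
  field_simp
  ring

set_option maxHeartbeats 4000000 in
lemma final_calc (f : ℝ → ℝ) {x : ℝ} (hx : x ≠ 0) :
    L2zero f x = OpEv opC4 f x - OpEv opC1 f x := by
  have h2 : iteratedDeriv 2 f = deriv (deriv f) := by
    rw [show (2:ℕ) = 1+1 from rfl, iteratedDeriv_succ, iteratedDeriv_one]
  have h3 : iteratedDeriv 3 f = deriv (iteratedDeriv 2 f) := by
    rw [show (3:ℕ) = 2+1 from rfl, iteratedDeriv_succ]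
  have h4 : iteratedDeriv 4 f = deriv (iteratedDeriv 3 f) := by
    rw [show (4:ℕ) = 3+1 from rfl, iteratedDeriv_succ]
  have h5 : iteratedDeriv 5 f = deriv (iteratedDeriv 4 f) := by
    rw [show (5:ℕ) = 4+1 from rfl, iteratedDeriv_succ]
  have h6 : iteratedDeriv 6 f = deriv (iteratedDeriv 5 f) := by
    rw [show (6:ℕ) = 5+1 from rfl, iteratedDeriv_succ]
  have h7 : iteratedDeriv 7 f = deriv (iteratedDeriv 6 f) := by
    rw [show (7:ℕ) = 6+1 from rfl, iteratedDeriv_succ]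
  have h8 : iteratedDeriv 8 f = deriv (iteratedDeriv 7 f) := by
    rw [show (8:ℕ) = 7+1 from rfl, iteratedDeriv_succ]
  have h9 : iteratedDeriv 9 f = deriv (iteratedDeriv 8 f) := by
    rw [show (9:ℕ) = 8+1 from rfl, iteratedDeriv_succ]
  have h10 : iteratedDeriv 10 f = deriv (iteratedDeriv 9 f) := by
    rw [show (10:ℕ) = 9+1 from rfl, iteratedDeriv_succ]
  have h11 : iteratedDeriv 11 f = deriv (iteratedDeriv 10 f) := by
    rw [show (11:ℕ) = 10+1 from rfl, iteratedDeriv_succ]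
  have h12 : iteratedDeriv 12 f = deriv (iteratedDeriv 11 f) := by
    rw [show (12:ℕ) = 11+1 from rfl, iteratedDeriv_succ]
  simp only [L2zero, gcoef0, gcoef1, gcoef2, gcoef3, gcoef4, gcoef5, gcoef6, gcoef7,
    gcoef8, gcoef9, gcoef10, h12, h11, h10, h9, h8, h7, h6, h5, h4, h3, h2, iteratedDeriv_one,
    opC1, opC4, OpEv_cons, OpEv_nil, Lev_cons, Lev_nil]
  field_simp
  ring

/-- L₂ at ε = 0 equals 𝓛⁴ − 𝓛. -/
theorem L2zero_eq_calL_pow_four_sub_calL (f : ℝ → ℝ)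
    (hf : ContDiffOn ℝ (⊤ : ℕ∞) f {x : ℝ | x ≠ 0}) :
    ∀ x : ℝ, x ≠ 0 → L2zero f x = calL (calL (calL (calL f))) x - calL f x := by
  intro x hx
  have hs : Sm f := Sm_of hf
  rw [stage4 f hs x hx, stage1 f hs x hx]
  exact final_calc f hx
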